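/- Let G be a finite simple graph admitting a barbell partition and let v be a vertex of G. Then the graph dup(G, v), obtained from G by adding a new vertex u adjacent exactly to the neighbors of v, admits a barbell partition. -/

import Mathlib

open SimpleGraph

/-- A barbell partition of a graph `G`: a partition of the vertex set into
`R`, `W1`, `W2` with `W1, W2` nonempty, no edges between `W1` and `W2`, and
every vertex of `R` has a number of neighbors in each `Wi` different from 1. -/
def IsBarbellPartition {V : Type*} (G : SimpleGraph V) (R W1 W2 : Set V) : Prop :=
  R ∪ W1 ∪ W2 = Set.univ ∧ Disjoint R W1 ∧ Disjoint R W2 ∧ Disjoint W1 W2 ∧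
  W1.Nonempty ∧ W2.Nonempty ∧
  (∀ w1 ∈ W1, ∀ w2 ∈ W2, ¬ G.Adj w1 w2) ∧
  (∀ v ∈ R, (G.neighborSet v ∩ W1).ncard ≠ 1 ∧ (G.neighborSet v ∩ W2).ncard ≠ 1)

/-- `G` admits a barbell partition. -/
def HasBarbellPartition {V : Type*} (G : SimpleGraph V) : Prop :=
  ∃ R W1 W2 : Set V, IsBarbellPartition G R W1 W2

/-- A fort of `G`: a nonempty vertex set `F` such that no vertex outside `F`
has exactly one neighbor in `F`. -/
def IsFort {V : Type*} (G : SimpleGraph V) (F : Set V) : Prop :=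
  F.Nonempty ∧ ∀ v ∉ F, (G.neighborSet v ∩ F).ncard ≠ 1

/-- `dup G v`: duplicate the vertex `v` of `G` without an edge; the new vertex
`none` is adjacent exactly to the neighbors of `v`. -/
def dup {V : Type*} (G : SimpleGraph V) (v : V) : SimpleGraph (Option V) where
  Adj x y :=
    match x, y with
    | some a, some b => G.Adj a b
    | some a, none => G.Adj v a
    | none, some a => G.Adj v a
    | none, none => False
  symm := ⟨by
    rintro (_ | a) (_ | b) h
    · exact h
    · exact h
    · exact h
    · exact h.symm⟩
  loopless := ⟨by
    rintro (_ | a) h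
    · exact h
    · exact G.irrefl h⟩

/-- `jdup G v`: duplicate the vertex `v` of `G` with an edge; the new vertex
`none` is adjacent to `v` and to all neighbors of `v`. -/
def jdup {V : Type*} (G : SimpleGraph V) (v : V) : SimpleGraph (Option V) where
  Adj x y :=
    match x, y with
    | some a, some b => G.Adj a b
    | some a, none => G.Adj v a ∨ a = v
    | none, some a => G.Adj v a ∨ a = v
    | none, none => False
  symm := ⟨by
    rintro (_ | a) (_ | b) h
    · exact h
    · exact h
    · exact h
    · exact h.symm⟩
  loopless := ⟨by
    rintro (_ | a) h
    · exact h
    · exact G.irrefl h⟩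

/-!
`dup G v` is the pullback of `G` along the surjection `Option V → V` that sends the new vertex
to `v`. Barbell partitions pull back along surjections: a neighbourhood in the pulled-back graph
meets the preimage of a part in the preimage of the original intersection, and a preimage under a
surjection is a singleton only if the set itself is.
-/

open Function Set

theorem Set.ncard_eq_one_of_ncard_preimage_eq_one {α β : Type*} {f : α → β} (hf : Surjective f)
    {s : Set β} (h : (f ⁻¹' s).ncard = 1) : s.ncard = 1 := by
  obtain ⟨a, ha⟩ := ncard_eq_one.1 h
  rw [← image_preimage_eq s hf, ha, image_singleton, ncard_singleton]

theorem IsBarbellPartition.comap {V W : Type*} {G : SimpleGraph V} {R W1 W2 : Set V}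
    (h : IsBarbellPartition G R W1 W2) {f : W → V} (hf : Surjective f) :
    IsBarbellPartition (G.comap f) (f ⁻¹' R) (f ⁻¹' W1) (f ⁻¹' W2) := by
  obtain ⟨hcover, hRW1, hRW2, hW12, hW1, hW2, hnoAdj, hdeg⟩ := h
  have hnbr (x : W) (S : Set V) :
      (G.comap f).neighborSet x ∩ f ⁻¹' S = f ⁻¹' (G.neighborSet (f x) ∩ S) := rfl
  refine ⟨by rw [← preimage_union, ← preimage_union, hcover, preimage_univ],
    hRW1.preimage f, hRW2.preimage f, hW12.preimage f, hW1.preimage hf, hW2.preimage hf,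
    fun x hx y hy => hnoAdj _ hx _ hy, fun x hx => ?_⟩
  rw [hnbr, hnbr]
  exact ⟨mt (ncard_eq_one_of_ncard_preimage_eq_one hf) (hdeg _ hx).1,
    mt (ncard_eq_one_of_ncard_preimage_eq_one hf) (hdeg _ hx).2⟩

theorem dup_eq_comap {V : Type*} (G : SimpleGraph V) (v : V) :
    dup G v = G.comap (Option.getD · v) := by
  ext (_ | a) (_ | b) <;> simp [dup, G.adj_comm]

theorem dup_hasBarbellPartition_general {V : Type*} (G : SimpleGraph V) (v : V)
    (h : HasBarbellPartition G) : HasBarbellPartition (dup G v) := by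
  obtain ⟨R, W1, W2, hp⟩ := h
  rw [dup_eq_comap]
  exact ⟨_, _, _, hp.comap fun a => ⟨some a, rfl⟩⟩

/-- If `G` admits a barbell partition, then duplicating any vertex (without an
edge) yields a graph admitting a barbell partition. -/
theorem dup_hasBarbellPartition {V : Type*} [Fintype V] (G : SimpleGraph V) (v : V)
    (h : HasBarbellPartition G) : HasBarbellPartition (dup G v) :=
  dup_hasBarbellPartition_general G v h
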